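/- arXiv:math/9908178 — 5 statements merged into one kernel-verified Lean document; each statement's English description precedes it below -/
import Mathlib

section
/- With the notation of the previous statement (finite linearly ordered set S with maximum m, alternating sum γ with values in an abelian group V), the image of γ on the subsets of S of even cardinality has the same (finite) cardinality as the image of γ on the subsets of odd cardinality. -/
/-!
Toggling the maximum `m` in or out of `Q` is an involution of the finite sets that swaps the
parity of the cardinality. Since `m` is the last element of the sorted list, toggling it only
changes the last term of the alternating sum; on an even set this adds `w m` either way. Hence
the image of `γ` on odd sets is the translate by `w m` of its image on even sets.
-/

/-- The alternating sum `γ(Q) = ∑ (-1)^(j-1) w(q_j)` over the elements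
`q₁ < q₂ < ⋯ < q_k` of a finite set `Q`, with `γ(∅) = 0`. -/
def altSum {S V : Type*} [LinearOrder S] [AddCommGroup V] (w : S → V) (Q : Finset S) : V :=
  ((Q.sort (· ≤ ·)).mapIdx fun i x => ((-1 : ℤ) ^ i) • w x).sum

open scoped symmDiff

namespace Finset

variable {α : Type*} [DecidableEq α] {s : Finset α} {a : α}

theorem sort_insert_of_forall_rel (r : α → α → Prop) [DecidableRel r] [IsTrans α r]
    [Std.Antisymm r] [Std.Total r] (h₁ : ∀ b ∈ s, r b a) (h₂ : a ∉ s) :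
    sort (insert a s) r = sort s r ++ [a] := by
  refine List.Perm.eq_of_pairwise' (r := r) (pairwise_sort _ _) ?_ ?_
  · exact List.pairwise_append.2 ⟨pairwise_sort _ _, List.pairwise_singleton _ _,
      fun b hb _ hc => List.mem_singleton.1 hc ▸ h₁ b ((mem_sort r).1 hb)⟩
  · rw [← Multiset.coe_eq_coe, ← Multiset.coe_add, sort_eq, sort_eq, insert_val_of_notMem h₂,
      add_comm]
    rfl

theorem symmDiff_singleton_of_mem (h : a ∈ s) : s ∆ {a} = s.erase a := by
  ext b; by_cases hb : b = a <;> simp [mem_symmDiff, hb, h]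

theorem symmDiff_singleton_of_notMem (h : a ∉ s) : s ∆ {a} = insert a s := by
  ext b; by_cases hb : b = a <;> simp [mem_symmDiff, hb, h]

theorem even_card_symmDiff_singleton_iff : Even (s ∆ {a}).card ↔ ¬Even s.card := by
  by_cases h : a ∈ s
  · rw [symmDiff_singleton_of_mem h, ← card_erase_add_one h, Nat.even_add_one, not_not]
  · rw [symmDiff_singleton_of_notMem h, card_insert_of_notMem h, Nat.even_add_one]

end Finset

open Finset

section

variable {S V : Type*} [LinearOrder S] [AddCommGroup V] (w : S → V) {m : S}

theorem altSum_insert_of_forall_le {Q : Finset S} (hm : ∀ s ∈ Q, s ≤ m) (hmQ : m ∉ Q) :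
    altSum w (insert m Q) = altSum w Q + ((-1 : ℤ) ^ Q.card) • w m := by
  rw [altSum, sort_insert_of_forall_rel _ hm hmQ, List.mapIdx_append_one, List.sum_append,
    List.sum_singleton, length_sort, altSum]

theorem altSum_symmDiff_singleton_of_even {Q : Finset S} (hm : ∀ s ∈ Q, s ≤ m)
    (hQ : Even Q.card) : altSum w (Q ∆ {m}) = altSum w Q + w m := by
  by_cases hmQ : m ∈ Q
  · have hodd : Odd (Q.erase m).card := by
      rw [← symmDiff_singleton_of_mem hmQ, ← Nat.not_even_iff_odd,
        even_card_symmDiff_singleton_iff, not_not]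
      exact hQ
    have h := altSum_insert_of_forall_le w (fun s hs => hm s (mem_of_mem_erase hs))
      (notMem_erase m Q)
    rw [insert_erase hmQ, hodd.neg_one_pow, neg_one_smul] at h
    rw [symmDiff_singleton_of_mem hmQ, h, neg_add_cancel_right]
  · rw [symmDiff_singleton_of_notMem hmQ, altSum_insert_of_forall_le w hm hmQ, hQ.neg_one_pow,
      one_smul]

theorem altSum_image_odd_eq_image_even_add (hm : ∀ s, s ≤ m) :
    altSum w '' {Q : Finset S | Odd Q.card} =
      (· + w m) '' (altSum w '' {Q : Finset S | Even Q.card}) := by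
  have htoggle : (· ∆ {m}) '' {Q : Finset S | Even Q.card} = {Q | Odd Q.card} := by
    rw [(symmDiff_left_involutive ({m} : Finset S)).image_eq_preimage_symm]
    exact Set.ext fun Q => even_card_symmDiff_singleton_iff.trans Nat.not_even_iff_odd
  rw [← htoggle, Set.image_image, Set.image_image]
  exact Set.image_congr fun Q hQ => altSum_symmDiff_singleton_of_even w (fun s _ => hm s) hQ

end

theorem ncard_image_altSum_even_eq_odd_general {S V : Type*} [LinearOrder S]
    [AddCommGroup V] (w : S → V) (m : S) (hm : ∀ s, s ≤ m) :
    (altSum w '' {Q : Finset S | Even Q.card}).ncard =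
      (altSum w '' {Q : Finset S | Odd Q.card}).ncard := by
  rw [altSum_image_odd_eq_image_even_add w hm,
    Set.ncard_image_of_injective _ (add_left_injective (w m))]

/-- The image of `γ` on even-cardinality subsets has the same cardinality as
its image on odd-cardinality subsets. -/
theorem ncard_image_altSum_even_eq_odd {S V : Type*} [Fintype S] [LinearOrder S]
    [AddCommGroup V] (w : S → V) (m : S) (hm : ∀ s, s ≤ m) :
    (altSum w '' {Q : Finset S | Even Q.card}).ncard =
      (altSum w '' {Q : Finset S | Odd Q.card}).ncard :=
  ncard_image_altSum_even_eq_odd_general w m hm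
end

section
/- Let u, v ∈ ℤ² be linearly independent over ℝ. If the closed triangle with vertices 0, u, v contains no lattice point other than its three vertices, then |u_1·v_2 - u_2·v_1| = 1. -/
private lemma mem_hull3 {x y z w : ℝ × ℝ} {a b c : ℝ} (ha : 0 ≤ a) (hb : 0 ≤ b) (hc : 0 ≤ c)
    (habc : a + b + c = 1) (hw : w = a • x + b • y + c • z) :
    w ∈ convexHull ℝ ({x, y, z} : Set (ℝ × ℝ)) := by
  have hmem : ∀ i ∈ (Finset.univ : Finset (Fin 3)),
      (![x, y, z]) i ∈ convexHull ℝ ({x, y, z} : Set (ℝ × ℝ)) := by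
    intro i _
    apply subset_convexHull
    fin_cases i <;> simp
  have hnn : ∀ i ∈ (Finset.univ : Finset (Fin 3)), 0 ≤ (![a, b, c]) i := by
    intro i _; fin_cases i <;> assumption
  have hsum : ∑ i ∈ (Finset.univ : Finset (Fin 3)), (![a, b, c]) i = 1 := by
    simp [Fin.sum_univ_three]; linarith
  have := (convex_convexHull ℝ ({x, y, z} : Set (ℝ × ℝ))).sum_mem hnn hsum hmem
  simp only [Fin.sum_univ_three, Matrix.cons_val_zero, Matrix.cons_val_one, Matrix.head_cons,
    Matrix.cons_val_two, Matrix.tail_cons] at this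
  rw [hw]; exact this

private lemma aux_no_lattice (u v : ℤ × ℤ) (hD : 2 ≤ u.1 * v.2 - u.2 * v.1)
    (h : ∀ p : ℤ × ℤ,
      (((p.1 : ℝ), (p.2 : ℝ)) : ℝ × ℝ) ∈
        convexHull ℝ {((0, 0) : ℝ × ℝ), ((u.1 : ℝ), (u.2 : ℝ)), ((v.1 : ℝ), (v.2 : ℝ))} →
      p = 0 ∨ p = u ∨ p = v) : False := by
  set D : ℤ := u.1 * v.2 - u.2 * v.1 with hDdef
  have hDpos : 0 < D := by omega
  have hDne : D ≠ 0 := by omega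
  have hDRne : (D : ℝ) ≠ 0 := by exact_mod_cast hDne
  -- key: any lattice point whose (Cramer) coordinates c1/D, c2/D lie in the triangle
  have key : ∀ (c1 c2 : ℤ) (p : ℤ × ℤ), 0 ≤ c1 → 0 ≤ c2 → c1 + c2 ≤ D →
      p.1 * D = c1 * u.1 + c2 * v.1 → p.2 * D = c1 * u.2 + c2 * v.2 →
      (c1 = 0 ∧ c2 = 0) ∨ (c1 = D ∧ c2 = 0) ∨ (c1 = 0 ∧ c2 = D) := by
    intro c1 c2 p h1 h2 h3 hp1 hp2
    have hcr1 : ((p.1 : ℝ)) * D = c1 * u.1 + c2 * v.1 := by exact_mod_cast hp1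
    have hcr2 : ((p.2 : ℝ)) * D = c1 * u.2 + c2 * v.2 := by exact_mod_cast hp2
    have hmem : (((p.1 : ℝ), (p.2 : ℝ)) : ℝ × ℝ) ∈
        convexHull ℝ {((0, 0) : ℝ × ℝ), ((u.1 : ℝ), (u.2 : ℝ)), ((v.1 : ℝ), (v.2 : ℝ))} := by
      refine mem_hull3 (a := ((D : ℝ) - c1 - c2) / D) (b := (c1 : ℝ) / D) (c := (c2 : ℝ) / D)
        ?_ ?_ ?_ ?_ ?_
      · apply div_nonneg
        · have : (c1 : ℝ) + c2 ≤ D := by exact_mod_cast h3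
          linarith
        · positivity
      · apply div_nonneg; · exact_mod_cast h1
        positivity
      · apply div_nonneg; · exact_mod_cast h2
        positivity
      · field_simp; ring
      · simp only [Prod.smul_mk, smul_eq_mul, Prod.mk_add_mk, Prod.mk.injEq, mul_zero]
        constructor
        · field_simp
          linear_combination hcr1
        · field_simp
          linear_combination hcr2
    -- decode the conclusion
    have e1 : c1 * D = (p.1 * v.2 - p.2 * v.1) * D := by
      linear_combination v.1 * hp2 - v.2 * hp1
    have e2 : c2 * D = (u.1 * p.2 - u.2 * p.1) * D := by
      linear_combination u.2 * hp1 - u.1 * hp2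
    have e1' : c1 = p.1 * v.2 - p.2 * v.1 := mul_right_cancel₀ hDne e1
    have e2' : c2 = u.1 * p.2 - u.2 * p.1 := mul_right_cancel₀ hDne e2
    rcases h p hmem with h0 | h0 | h0
    · left
      have hp1' : p.1 = 0 := by simp [h0]
      have hp2' : p.2 = 0 := by simp [h0]
      constructor
      · rw [e1', hp1', hp2']; ring
      · rw [e2', hp1', hp2']; ring
    · right; left
      have hp1' : p.1 = u.1 := by rw [h0]
      have hp2' : p.2 = u.2 := by rw [h0]
      constructor
      · rw [e1', hp1', hp2']
      · rw [e2', hp1', hp2']; ring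
    · right; right
      have hp1' : p.1 = v.1 := by rw [h0]
      have hp2' : p.2 = v.2 := by rw [h0]
      constructor
      · rw [e1', hp1', hp2']; ring
      · rw [e2', hp1', hp2']
  -- find a lattice point not in the lattice generated by u, v
  have hq0 : ∃ q0 : ℤ × ℤ, ¬ (D ∣ (q0.1 * v.2 - q0.2 * v.1)) ∨ ¬ (D ∣ (u.1 * q0.2 - u.2 * q0.1)) := by
    by_contra hc
    push_neg at hc
    obtain ⟨ha1, hb1⟩ := hc (1, 0)
    obtain ⟨ha2, hb2⟩ := hc (0, 1)
    simp only at ha1 hb1 ha2 hb2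
    have dv2 : D ∣ v.2 := by simpa using ha1
    have du2 : D ∣ u.2 := by
      have : D ∣ -(u.1 * 0 - u.2 * 1) := dvd_neg.mpr hb1
      simpa using this
    have dv1 : D ∣ v.1 := by
      have : D ∣ -(0 * v.2 - 1 * v.1) := dvd_neg.mpr ha2
      simpa using this
    have du1 : D ∣ u.1 := by simpa using hb2
    have hDD : D * D ∣ D := by
      have h1 : D * D ∣ u.1 * v.2 := mul_dvd_mul du1 dv2
      have h2 : D * D ∣ u.2 * v.1 := mul_dvd_mul du2 dv1
      rw [hDdef]
      exact dvd_sub h1 h2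
    have := Int.le_of_dvd hDpos hDD
    nlinarith
  obtain ⟨q0, hq0⟩ := hq0
  set a0 : ℤ := q0.1 * v.2 - q0.2 * v.1 with ha0def
  set b0 : ℤ := u.1 * q0.2 - u.2 * q0.1 with hb0def
  set m : ℤ := a0 / D with hmdef
  set n : ℤ := b0 / D with hndef
  set r : ℤ := a0 % D with hrdef
  set s : ℤ := b0 % D with hsdef
  have hr0 : 0 ≤ r := Int.emod_nonneg _ hDne
  have hrD : r < D := Int.emod_lt_of_pos _ hDpos
  have hs0 : 0 ≤ s := Int.emod_nonneg _ hDne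
  have hsD : s < D := Int.emod_lt_of_pos _ hDpos
  have hra : a0 = D * m + r := (Int.mul_ediv_add_emod a0 D).symm
  have hsb : b0 = D * n + s := (Int.mul_ediv_add_emod b0 D).symm
  have hne : r ≠ 0 ∨ s ≠ 0 := by
    rcases hq0 with h' | h'
    · left; intro h0; exact h' (Int.dvd_of_emod_eq_zero h0)
    · right; intro h0; exact h' (Int.dvd_of_emod_eq_zero h0)
  set p : ℤ × ℤ := (q0.1 - m * u.1 - n * v.1, q0.2 - m * u.2 - n * v.2) with hpdef
  -- Cramer identities for q0
  have hcram1 : q0.1 * D = a0 * u.1 + b0 * v.1 := by rw [ha0def, hb0def, hDdef]; ring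
  have hcram2 : q0.2 * D = a0 * u.2 + b0 * v.2 := by rw [ha0def, hb0def, hDdef]; ring
  have hp1 : p.1 * D = r * u.1 + s * v.1 := by
    have : p.1 = q0.1 - m * u.1 - n * v.1 := rfl
    rw [this]
    linear_combination hcram1 + u.1 * hra + v.1 * hsb
  have hp2 : p.2 * D = r * u.2 + s * v.2 := by
    have : p.2 = q0.2 - m * u.2 - n * v.2 := rfl
    rw [this]
    linear_combination hcram2 + u.2 * hra + v.2 * hsb
  rcases le_or_gt (r + s) D with hle | hlt
  · rcases key r s p hr0 hs0 hle hp1 hp2 with ⟨h1, h2⟩ | ⟨h1, _⟩ | ⟨_, h2⟩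
    · tauto
    · omega
    · omega
  · set q : ℤ × ℤ := (u.1 + v.1 - p.1, u.2 + v.2 - p.2) with hqdef
    have hq1 : q.1 * D = (D - r) * u.1 + (D - s) * v.1 := by
      have : q.1 = u.1 + v.1 - p.1 := rfl
      rw [this]
      linear_combination -hp1
    have hq2 : q.2 * D = (D - r) * u.2 + (D - s) * v.2 := by
      have : q.2 = u.2 + v.2 - p.2 := rfl
      rw [this]
      linear_combination -hp2
    rcases key (D - r) (D - s) q (by omega) (by omega) (by omega) hq1 hq2 with
      ⟨h1, _⟩ | ⟨_, h2⟩ | ⟨h1, _⟩ <;> omega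

/-- If `u, v ∈ ℤ²` are linearly independent over `ℝ` and the closed triangle with
vertices `0, u, v` contains no lattice point other than its vertices, then
`|u₁ v₂ - u₂ v₁| = 1`. -/
theorem det_eq_one_of_no_interior_lattice_point (u v : ℤ × ℤ)
    (hli : LinearIndependent ℝ ![(((u.1 : ℝ), (u.2 : ℝ)) : ℝ × ℝ), ((v.1 : ℝ), (v.2 : ℝ))])
    (h : ∀ p : ℤ × ℤ,
      (((p.1 : ℝ), (p.2 : ℝ)) : ℝ × ℝ) ∈
        convexHull ℝ {((0, 0) : ℝ × ℝ), ((u.1 : ℝ), (u.2 : ℝ)), ((v.1 : ℝ), (v.2 : ℝ))} →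
      p = 0 ∨ p = u ∨ p = v) :
    |u.1 * v.2 - u.2 * v.1| = 1 := by
  -- the determinant is nonzero by linear independence
  have hD0 : u.1 * v.2 - u.2 * v.1 ≠ 0 := by
    intro h0
    rw [LinearIndependent.pair_iff] at hli
    by_cases h2 : u.2 = 0 ∧ v.2 = 0
    · obtain ⟨hu2, hv2⟩ := h2
      by_cases h1 : u.1 = 0 ∧ v.1 = 0
      · obtain ⟨hu1, hv1⟩ := h1
        have := hli 1 0 (by
          simp [hu1, hu2, hv1, hv2, Prod.ext_iff])
        exact one_ne_zero this.1
      · have := hli (v.1 : ℝ) (-(u.1 : ℝ)) (by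
          simp only [Prod.smul_mk, smul_eq_mul, Prod.mk_add_mk, Prod.mk_eq_zero]
          constructor
          · ring
          · push_cast [hu2, hv2]; ring)
        have hv1 : v.1 = 0 := by exact_mod_cast this.1
        have hu1 : u.1 = 0 := by
          have := this.2
          have : (u.1 : ℝ) = 0 := by linarith [neg_eq_zero.mp this]
          exact_mod_cast this
        exact h1 ⟨hu1, hv1⟩
    · have := hli (v.2 : ℝ) (-(u.2 : ℝ)) (by
        simp only [Prod.smul_mk, smul_eq_mul, Prod.mk_add_mk, Prod.mk_eq_zero]
        constructor
        · have : (u.1 : ℝ) * v.2 - u.2 * v.1 = 0 := by exact_mod_cast h0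
          linarith [this]
        · ring)
      have hv2 : v.2 = 0 := by exact_mod_cast this.1
      have hu2 : u.2 = 0 := by
        have h' := this.2
        have : (u.2 : ℝ) = 0 := by linarith [neg_eq_zero.mp h']
        exact_mod_cast this
      exact h2 ⟨hu2, hv2⟩
  by_contra hne
  have habs : u.1 * v.2 - u.2 * v.1 ≤ -2 ∨ 2 ≤ u.1 * v.2 - u.2 * v.1 := by
    rcases abs_cases (u.1 * v.2 - u.2 * v.1) with ⟨h1, _⟩ | ⟨h1, _⟩ <;> omega
  rcases habs with hneg | hpos
  · -- apply aux with u, v swapped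
    refine aux_no_lattice v u (by nlinarith [mul_comm v.1 u.2, mul_comm v.2 u.1]) ?_
    intro p hp
    have hset : ({((0, 0) : ℝ × ℝ), ((v.1 : ℝ), (v.2 : ℝ)), ((u.1 : ℝ), (u.2 : ℝ))} : Set (ℝ × ℝ))
        = {((0, 0) : ℝ × ℝ), ((u.1 : ℝ), (u.2 : ℝ)), ((v.1 : ℝ), (v.2 : ℝ))} := by
      ext x; simp only [Set.mem_insert_iff, Set.mem_singleton_iff]; tauto
    rw [hset] at hp
    rcases h p hp with h' | h' | h' <;> tauto
  · exact aux_no_lattice u v hpos h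
end

section
/- Let C ⊂ ℝ² \ {0} be a convex cone spanned by two linearly independent vectors, let E be the convex hull of C ∩ ℤ², and let w be a primitive lattice point in the interior of C. If there exists a lattice point v ∈ C such that w - v also lies in C, then w lies in the interior of E. Conversely, if w lies on the boundary of E, then for every lattice point v ∈ C the point w - v lies outside C. -/
/-!
Write `w = v + q` with `v, q` lattice points of `C`. They are not parallel: otherwise
`v = μ • w` with `0 < μ < 1` (`C` is salient and misses `0`), while primitivity of `w` forces
`μ ∈ ℤ`. Hence `v, q` span `ℝ²`, and `w` is the centre of the parallelogram with vertices
`w ± v = 2v + q, q` and `w ± q = v + 2q, v`, all lattice points of `C`. A centrally symmetric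
convex set with nonempty interior contains its centre in its interior. The second claim follows
because the frontier of `E` is disjoint from its interior.
-/

open scoped Pointwise

theorem Convex.zero_mem_interior_of_neg_mem {V : Type*} [AddCommGroup V] [Module ℝ V]
    [TopologicalSpace V] [IsTopologicalAddGroup V] [ContinuousConstSMul ℝ V] {s : Set V}
    (hs : Convex ℝ s) (hneg : ∀ x ∈ s, -x ∈ s) (hint : (interior s).Nonempty) :
    (0 : V) ∈ interior s := by
  obtain ⟨x, hx⟩ := hint
  have hnx : -x ∈ interior s :=
    interior_maximal (fun y hy => by simpa using hneg _ (interior_subset hy))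
      isOpen_interior.neg (by simpa using hx)
  simpa using hs.interior hx hnx (by norm_num : (0 : ℝ) ≤ 1 / 2) (by norm_num) (add_halves 1)

theorem zero_mem_interior_convexHull_union_neg {V : Type*} [NormedAddCommGroup V]
    [NormedSpace ℝ V] [FiniteDimensional ℝ V] {s : Set V} (hne : s.Nonempty)
    (hs : Submodule.span ℝ s = ⊤) : (0 : V) ∈ interior (convexHull ℝ (s ∪ -s)) := by
  refine (convex_convexHull ℝ _).zero_mem_interior_of_neg_mem (fun x hx => ?_) ?_
  · rw [← Set.mem_neg, ← convexHull_neg, Set.union_neg, neg_neg, Set.union_comm]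
    exact hx
  · rw [interior_convexHull_nonempty_iff_affineSpan_eq_top,
      AffineSubspace.affineSpan_eq_top_iff_vectorSpan_eq_top_of_nonempty ℝ V V
        (hne.mono Set.subset_union_left), eq_top_iff, ← hs, Submodule.span_le]
    intro x hx
    have hsub : x - -x ∈ vectorSpan ℝ (s ∪ -s) :=
      vsub_mem_vectorSpan ℝ (Or.inl hx) (Or.inr (by simpa using hx))
    simpa [← two_smul ℝ] using Submodule.smul_mem _ (1 / 2 : ℝ) hsub

theorem mem_interior_convexHull_vadd_union_neg {V : Type*} [NormedAddCommGroup V]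
    [NormedSpace ℝ V] [FiniteDimensional ℝ V] (w : V) {s : Set V} (hne : s.Nonempty)
    (hs : Submodule.span ℝ s = ⊤) : w ∈ interior (convexHull ℝ (w +ᵥ (s ∪ -s))) := by
  rw [convexHull_vadd, interior_vadd]
  simpa using Set.vadd_mem_vadd_set (a := w) (zero_mem_interior_convexHull_union_neg hne hs)

def intLattice : AddSubgroup (ℝ × ℝ) :=
  ((Int.castAddHom ℝ).prodMap (Int.castAddHom ℝ)).range

theorem mem_intLattice {x : ℝ × ℝ} :
    x ∈ intLattice ↔ ∃ p : ℤ × ℤ, x = ((p.1 : ℝ), (p.2 : ℝ)) := by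
  simp only [intLattice, AddMonoidHom.mem_range, AddMonoidHom.coe_prodMap, Prod.map,
    Int.coe_castAddHom]
  exact exists_congr fun _ => eq_comm

theorem exists_int_eq_of_smul_mem_intLattice {a b : ℤ} (hprim : Int.gcd a b = 1) {μ : ℝ}
    (h : μ • ((a : ℝ), (b : ℝ)) ∈ intLattice) : ∃ k : ℤ, μ = k := by
  obtain ⟨⟨m, n⟩, hmn⟩ := mem_intLattice.mp h
  simp only [Prod.smul_mk, smul_eq_mul, Prod.mk.injEq] at hmn
  have hbezout : (a : ℝ) * Int.gcdA a b + b * Int.gcdB a b = 1 := by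
    exact_mod_cast (hprim ▸ Int.gcd_eq_gcd_ab a b).symm
  refine ⟨m * Int.gcdA a b + n * Int.gcdB a b, ?_⟩
  push_cast
  linear_combination hmn.1 * (Int.gcdA a b : ℝ) + hmn.2 * Int.gcdB a b - μ * hbezout

namespace ConvexCone

section

variable {C : ConvexCone ℝ (ℝ × ℝ)} {v q : ℝ × ℝ} {a b : ℤ}

theorem Blunt.linearIndependent_of_add_eq_primitive (hC : C.Blunt) (hv : v ∈ C) (hq : q ∈ C)
    (hvL : v ∈ intLattice) (hprim : Int.gcd a b = 1) (hw : v + q = ((a : ℝ), (b : ℝ))) :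
    LinearIndependent ℝ ![v, q] := by
  rw [linearIndependent_fin2]
  refine ⟨ne_of_mem_of_not_mem hq hC, fun c hc => ?_⟩
  simp only [Matrix.cons_val_one, Matrix.cons_val_zero] at hc
  rcases lt_trichotomy c 0 with hneg | rfl | hpos
  · refine hC.salient v hv (ne_of_mem_of_not_mem hv hC) ?_
    rw [← hc, ← neg_smul]
    exact C.smul_mem (neg_pos.mpr hneg) hq
  · exact hC (by simpa [← hc] using hv)
  · have hμ : (c / (1 + c)) • ((a : ℝ), (b : ℝ)) = v := by
      rw [← hw, ← hc, show c • q + q = (1 + c) • q by module, smul_smul,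
        div_mul_cancel₀ _ (by positivity)]
    obtain ⟨k, hk⟩ := exists_int_eq_of_smul_mem_intLattice hprim (hμ ▸ hvL)
    have hk0 : (0 : ℝ) < k := hk ▸ by positivity
    have hk1 : (k : ℝ) < 1 := hk ▸ (div_lt_one (by positivity)).mpr (by linarith)
    norm_cast at hk0 hk1
    omega

theorem Blunt.mem_interior_convexHull_inter_intLattice (hC : C.Blunt) (hv : v ∈ C) (hq : q ∈ C)
    (hvL : v ∈ intLattice) (hqL : q ∈ intLattice) (hprim : Int.gcd a b = 1)
    (hw : v + q = ((a : ℝ), (b : ℝ))) :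
    ((a : ℝ), (b : ℝ)) ∈ interior (convexHull ℝ ((C : Set (ℝ × ℝ)) ∩ intLattice)) := by
  have hspan : Submodule.span ℝ {v, q} = ⊤ := by
    have hli := hC.linearIndependent_of_add_eq_primitive hv hq hvL hprim hw
    simpa [Matrix.range_cons_cons_empty, Set.pair_comm] using
      hli.span_eq_top_of_card_eq_finrank (by simp)
  have hvertices :
      (v + q) +ᵥ ({v, q} ∪ -{v, q} : Set (ℝ × ℝ)) ⊆ (C : Set (ℝ × ℝ)) ∩ intLattice := by
    rintro _ ⟨x, hx, rfl⟩
    simp only [Set.union_insert, Set.union_singleton, Set.mem_insert_iff, Set.neg_insert,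
      Set.neg_singleton, Set.mem_singleton_iff] at hx
    rcases hx with rfl | rfl | rfl | rfl
    · show v + q + -v ∈ _
      rw [add_neg_cancel_comm]
      exact ⟨hq, hqL⟩
    · show v + q + -q ∈ _
      rw [add_neg_cancel_right]
      exact ⟨hv, hvL⟩
    · exact ⟨C.add_mem (C.add_mem hv hq) hv, add_mem (add_mem hvL hqL) hvL⟩
    · exact ⟨C.add_mem (C.add_mem hv hq) hq, add_mem (add_mem hvL hqL) hqL⟩
  rw [← hw]
  exact interior_mono (convexHull_mono hvertices)
    (mem_interior_convexHull_vadd_union_neg _ (Set.insert_nonempty _ _) hspan)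

end

section

variable {M : Type*} [AddCommGroup M] [Module ℝ M]

def bluntSpanPair (u v : M) (hli : LinearIndependent ℝ ![u, v]) : ConvexCone ℝ M where
  carrier := {x | ∃ s t : ℝ, 0 ≤ s ∧ 0 ≤ t ∧ x = s • u + t • v} \ {0}
  smul_mem' c hc x := by
    rintro ⟨⟨s, t, hs, ht, rfl⟩, hx0⟩
    refine ⟨⟨c * s, c * t, by positivity, by positivity, by module⟩, ?_⟩
    simpa only [Set.mem_singleton_iff, smul_eq_zero, hc.ne', false_or] using hx0
  add_mem' x := by
    rintro ⟨⟨s, t, hs, ht, rfl⟩, hx0⟩ y ⟨⟨s', t', hs', ht', rfl⟩, -⟩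
    refine ⟨⟨s + s', t + t', by positivity, by positivity, by module⟩, fun hsum => hx0 ?_⟩
    obtain ⟨hss, htt⟩ := LinearIndependent.pair_iff.mp hli (s + s') (t + t')
      (by rw [hsum.symm]; module)
    rw [show s = 0 by linarith, show t = 0 by linarith]
    simp

theorem bluntSpanPair_blunt {u v : M} (hli : LinearIndependent ℝ ![u, v]) :
    (bluntSpanPair u v hli).Blunt :=
  fun h => h.2 rfl

end

end ConvexCone

theorem interior_convexHull_lattice_cone_general (u v : ℝ × ℝ)
    (hli : LinearIndependent ℝ ![u, v])
    (C : Set (ℝ × ℝ))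
    (hC : C = {x : ℝ × ℝ | ∃ s t : ℝ, 0 ≤ s ∧ 0 ≤ t ∧ x = s • u + t • v} \ {0})
    (E : Set (ℝ × ℝ))
    (hE : E = convexHull ℝ (C ∩ {x : ℝ × ℝ | ∃ p : ℤ × ℤ, x = ((p.1 : ℝ), (p.2 : ℝ))}))
    (a b : ℤ) (hprim : Int.gcd a b = 1) :
    ((∃ p : ℤ × ℤ, (((p.1 : ℝ), (p.2 : ℝ)) : ℝ × ℝ) ∈ C ∧
        (((a : ℝ) - (p.1 : ℝ), (b : ℝ) - (p.2 : ℝ)) : ℝ × ℝ) ∈ C) →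
      (((a : ℝ), (b : ℝ)) : ℝ × ℝ) ∈ interior E) ∧
    ((((a : ℝ), (b : ℝ)) : ℝ × ℝ) ∈ frontier E →
      ∀ p : ℤ × ℤ, (((p.1 : ℝ), (p.2 : ℝ)) : ℝ × ℝ) ∈ C →
        (((a : ℝ) - (p.1 : ℝ), (b : ℝ) - (p.2 : ℝ)) : ℝ × ℝ) ∉ C) := by
  suffices hinterior : ∀ p : ℤ × ℤ, (((p.1 : ℝ), (p.2 : ℝ)) : ℝ × ℝ) ∈ C →
      (((a : ℝ) - (p.1 : ℝ), (b : ℝ) - (p.2 : ℝ)) : ℝ × ℝ) ∈ C →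
      (((a : ℝ), (b : ℝ)) : ℝ × ℝ) ∈ interior E from
    ⟨fun ⟨p, hp, hq⟩ => hinterior p hp hq, fun hfr p hp hq => hfr.2 (hinterior p hp hq)⟩
  intro p hp hq
  have hK : C = ConvexCone.bluntSpanPair u v hli := hC
  have hL : {x : ℝ × ℝ | ∃ p : ℤ × ℤ, x = ((p.1 : ℝ), (p.2 : ℝ))} = intLattice :=
    Set.ext fun _ => mem_intLattice.symm
  rw [hK] at hp hq
  rw [hE, hK, hL]
  have hqL : ((a : ℝ) - p.1, (b : ℝ) - p.2) ∈ intLattice :=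
    mem_intLattice.mpr ⟨(a - p.1, b - p.2), by push_cast; rfl⟩
  exact (ConvexCone.bluntSpanPair_blunt hli).mem_interior_convexHull_inter_intLattice hp hq
    (mem_intLattice.mpr ⟨p, rfl⟩) hqL hprim (by simp)

/-- Let `C` be the convex cone (minus the origin) spanned by two linearly
independent vectors of `ℝ²`, `E` the convex hull of the lattice points of `C`,
and `w = (a, b)` a primitive lattice point in the interior of `C`.
If some lattice point `v ∈ C` satisfies `w - v ∈ C`, then `w` lies in the
interior of `E`; conversely, if `w` lies on the boundary of `E`, then `w - v`
lies outside `C` for every lattice point `v ∈ C`. -/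
theorem interior_convexHull_lattice_cone (u v : ℝ × ℝ)
    (hli : LinearIndependent ℝ ![u, v])
    (C : Set (ℝ × ℝ))
    (hC : C = {x : ℝ × ℝ | ∃ s t : ℝ, 0 ≤ s ∧ 0 ≤ t ∧ x = s • u + t • v} \ {0})
    (E : Set (ℝ × ℝ))
    (hE : E = convexHull ℝ (C ∩ {x : ℝ × ℝ | ∃ p : ℤ × ℤ, x = ((p.1 : ℝ), (p.2 : ℝ))}))
    (a b : ℤ) (hprim : Int.gcd a b = 1)
    (hw : (((a : ℝ), (b : ℝ)) : ℝ × ℝ) ∈ interior C) :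
    ((∃ p : ℤ × ℤ, (((p.1 : ℝ), (p.2 : ℝ)) : ℝ × ℝ) ∈ C ∧
        (((a : ℝ) - (p.1 : ℝ), (b : ℝ) - (p.2 : ℝ)) : ℝ × ℝ) ∈ C) →
      (((a : ℝ), (b : ℝ)) : ℝ × ℝ) ∈ interior E) ∧
    ((((a : ℝ), (b : ℝ)) : ℝ × ℝ) ∈ frontier E →
      ∀ p : ℤ × ℤ, (((p.1 : ℝ), (p.2 : ℝ)) : ℝ × ℝ) ∈ C →
        (((a : ℝ) - (p.1 : ℝ), (b : ℝ) - (p.2 : ℝ)) : ℝ × ℝ) ∉ C) :=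
  interior_convexHull_lattice_cone_general u v hli C hC E hE a b hprim
end

section
/- If A ∈ SL₂(ℤ) has finite order, then A¹² = I. Equivalently, the order of any finite-order element of SL₂(ℤ) divides 12. -/
private def useq (t : ℤ) : ℕ → ℤ
  | 0 => 0
  | 1 => 1
  | (k+2) => t * useq t (k+1) - useq t k

private lemma useq_zero (t : ℤ) : useq t 0 = 0 := rfl
private lemma useq_one (t : ℤ) : useq t 1 = 1 := rfl
private lemma useq_add_two (t : ℤ) (k : ℕ) :
    useq t (k+2) = t * useq t (k+1) - useq t k := rfl

private lemma CH' (a b c d : ℤ) (hd : a * d - b * c = 1) :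
    !![a, b; c, d] ^ 2 = (a + d) • !![a, b; c, d] - 1 := by
  rw [pow_two, Matrix.one_fin_two, Matrix.mul_fin_two]
  rw [show ((a+d) • !![a, b; c, d] : Matrix (Fin 2) (Fin 2) ℤ)
      = !![(a+d)*a,(a+d)*b;(a+d)*c,(a+d)*d] by
    ext i j; fin_cases i <;> fin_cases j <;> simp [Matrix.smul_apply]]
  ext i j; fin_cases i <;> fin_cases j <;> simp <;> linarith

private lemma powf (M : Matrix (Fin 2) (Fin 2) ℤ) (t : ℤ)
    (hM : M ^ 2 = t • M - 1) :
    ∀ k, M ^ (k+1) = useq t (k+1) • M - useq t k • 1 := by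
  intro k
  induction k using Nat.twoStepInduction with
  | zero => simp [useq_zero, useq_one]
  | one => simpa [useq_add_two, useq_zero, useq_one] using hM
  | more k ih1 ih2 =>
    rw [show k + 2 + 1 = (k + 1 + 1) + 1 from rfl, pow_succ, ih2, sub_mul,
      smul_mul_assoc, smul_mul_assoc, one_mul, ← pow_two, hM, useq_add_two t (k+1)]
    module

private lemma useq_grow (t : ℤ) (ht : 3 ≤ |t|) : ∀ k, |useq t k| < |useq t (k+1)| := by
  intro k
  induction k with
  | zero => simp [useq_zero, useq_one]
  | succ k ih =>
    have h1 : (0:ℤ) ≤ |useq t k| := abs_nonneg _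
    have h2 : |t * useq t (k+1)| - |useq t k| ≤ |t * useq t (k+1) - useq t k| :=
      abs_sub_abs_le_abs_sub _ _
    rw [abs_mul] at h2
    have h3 : 3 * |useq t (k+1)| ≤ |t| * |useq t (k+1)| :=
      mul_le_mul_of_nonneg_right ht (abs_nonneg _)
    rw [useq_add_two]
    linarith

private lemma diag_of (M : Matrix (Fin 2) (Fin 2) ℤ) (t : ℤ) (n : ℕ)
    (hM : M ^ 2 = t • M - 1) (hn : 0 < n) (h1 : M ^ n = 1)
    (hu : useq t n ≠ 0) : M 0 1 = 0 ∧ M 1 0 = 0 ∧ M 0 0 = M 1 1 := by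
  obtain ⟨k, rfl⟩ : ∃ k, n = k + 1 := ⟨n - 1, (Nat.succ_pred_eq_of_pos hn).symm⟩
  have h := powf M t hM k
  rw [h1] at h
  have e : ∀ i j : Fin 2, (1 : Matrix (Fin 2) (Fin 2) ℤ) i j
      = useq t (k+1) * M i j - useq t k * (1 : Matrix (Fin 2) (Fin 2) ℤ) i j := by
    intro i j
    have h' := congrFun (congrFun h i) j
    rw [Matrix.sub_apply, Matrix.smul_apply, Matrix.smul_apply, smul_eq_mul, smul_eq_mul] at h'
    exact h'
  have e01 := e 0 1
  have e10 := e 1 0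
  have e00 := e 0 0
  have e11 := e 1 1
  simp [Matrix.one_apply] at e01 e10 e00 e11
  refine ⟨?_, ?_, ?_⟩
  · rcases e01 with h' | h'
    · exact absurd h' hu
    · exact h'
  · rcases e10 with h' | h'
    · exact absurd h' hu
    · exact h'
  · have hz : useq t (k+1) * (M 0 0 - M 1 1) = 0 := by linear_combination e11 - e00
    rcases mul_eq_zero.mp hz with h' | h'
    · exact absurd h' hu
    · linarith

private lemma useq_two' (k : ℕ) : useq 2 k = k := by
  induction k using Nat.twoStepInduction with
  | zero => rfl
  | one => rfl
  | more k ih1 ih2 => rw [useq_add_two, ih1, ih2]; push_cast; ring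

private lemma useq_neg_two (k : ℕ) : useq (-2) k = (-1)^(k+1) * k := by
  induction k using Nat.twoStepInduction with
  | zero => rfl
  | one => simp [useq_one]
  | more k ih1 ih2 => rw [useq_add_two, ih1, ih2]; push_cast; ring

/-- Any finite-order element of `SL₂(ℤ)` satisfies `A¹² = 1`; equivalently its
order divides 12. -/
theorem SL2Z_finite_order_pow_twelve (A : Matrix.SpecialLinearGroup (Fin 2) ℤ)
    (h : IsOfFinOrder A) : A ^ 12 = 1 ∧ orderOf A ∣ 12 := by
  obtain ⟨n, hn, hAn⟩ := isOfFinOrder_iff_pow_eq_one.mp h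
  set M : Matrix (Fin 2) (Fin 2) ℤ := (A : Matrix (Fin 2) (Fin 2) ℤ) with hM'
  have hdet : M.det = 1 := A.2
  rw [Matrix.det_fin_two] at hdet
  have hM : M ^ 2 = (M 0 0 + M 1 1) • M - 1 := by
    have := CH' (M 0 0) (M 0 1) (M 1 0) (M 1 1) hdet
    rwa [← Matrix.eta_fin_two M] at this
  have hMn : M ^ n = 1 := by
    have := congrArg (fun X : Matrix.SpecialLinearGroup (Fin 2) ℤ =>
      (X : Matrix (Fin 2) (Fin 2) ℤ)) hAn
    simpa [Matrix.SpecialLinearGroup.coe_pow] using this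
  -- trace bound
  have htb : -2 ≤ M 0 0 + M 1 1 ∧ M 0 0 + M 1 1 ≤ 2 := by
    by_contra hc
    have h3 : 3 ≤ |M 0 0 + M 1 1| := by
      rcases abs_cases (M 0 0 + M 1 1) with ⟨h', _⟩ | ⟨h', _⟩ <;> omega
    have hu : useq (M 0 0 + M 1 1) n ≠ 0 := by
      obtain ⟨k, rfl⟩ : ∃ k, n = k + 1 := ⟨n - 1, (Nat.succ_pred_eq_of_pos hn).symm⟩
      have hg := useq_grow (M 0 0 + M 1 1) h3 k
      have h0 := abs_nonneg (useq (M 0 0 + M 1 1) k)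
      intro h'
      rw [h'] at hg
      simp at hg
      omega
    obtain ⟨hb, hc', had⟩ := diag_of M (M 0 0 + M 1 1) n hM hn hMn hu
    have hsq : M 0 0 * M 0 0 = 1 := by
      rw [had] at hdet ⊢
      rw [hb, hc'] at hdet
      linarith
    rcases mul_self_eq_one_iff.mp hsq with h' | h' <;> omega
  -- twelve-th power of the matrix is 1
  have hM12 : M ^ 12 = 1 := by
    have hcase : M 0 0 + M 1 1 = -2 ∨ M 0 0 + M 1 1 = -1 ∨ M 0 0 + M 1 1 = 0 ∨
        M 0 0 + M 1 1 = 1 ∨ M 0 0 + M 1 1 = 2 := by omega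
    rcases hcase with h' | h' | h' | h' | h'
    · -- trace = -2 : M = -1
      rw [h'] at hM
      have hu : useq (-2 : ℤ) n ≠ 0 := by
        rw [useq_neg_two]
        rcases Nat.even_or_odd (n+1) with he | ho
        · rw [he.neg_one_pow]
          simpa using Nat.pos_iff_ne_zero.mp hn
        · rw [ho.neg_one_pow]
          simp only [neg_mul, one_mul, ne_eq, neg_eq_zero]
          simpa using Nat.pos_iff_ne_zero.mp hn
      obtain ⟨hb, hc', had⟩ := diag_of M (-2) n hM hn hMn hu
      have ha : M 0 0 = -1 := by omega
      have hd : M 1 1 = -1 := by omega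
      have hMneg : M = -1 := by
        rw [Matrix.eta_fin_two M, hb, hc', ha, hd]
        ext i j; fin_cases i <;> fin_cases j <;> simp [Matrix.one_apply]
      rw [hMneg]
      exact Even.neg_one_pow (by decide)
    · -- trace = -1 : M³ = 1
      rw [h'] at hM
      have h2 : M ^ 2 = -M - 1 := by rw [hM]; module
      have h3 : M ^ 3 = 1 := by
        rw [show (3:ℕ) = 2 + 1 from rfl, pow_succ, h2, sub_mul, neg_mul, one_mul,
          ← pow_two, h2]
        abel
      rw [show (12:ℕ) = 3 * 4 from rfl, pow_mul, h3, one_pow]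
    · -- trace = 0 : M² = -1
      rw [h'] at hM
      have h2 : M ^ 2 = -1 := by rw [hM]; module
      rw [show (12:ℕ) = 2 * 6 from rfl, pow_mul, h2]
      exact Even.neg_one_pow (by decide)
    · -- trace = 1 : M³ = -1
      rw [h'] at hM
      have h2 : M ^ 2 = M - 1 := by rw [hM]; module
      have h3 : M ^ 3 = -1 := by
        rw [show (3:ℕ) = 2 + 1 from rfl, pow_succ, h2, sub_mul, one_mul, ← pow_two, h2]
        abel
      rw [show (12:ℕ) = 3 * 4 from rfl, pow_mul, h3]
      exact Even.neg_one_pow (by decide)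
    · -- trace = 2 : M = 1
      rw [h'] at hM
      have hu : useq (2 : ℤ) n ≠ 0 := by
        rw [useq_two']
        simpa using Nat.pos_iff_ne_zero.mp hn
      obtain ⟨hb, hc', had⟩ := diag_of M 2 n hM hn hMn hu
      have ha : M 0 0 = 1 := by omega
      have hd : M 1 1 = 1 := by omega
      have hMone : M = 1 := by
        rw [Matrix.eta_fin_two M, hb, hc', ha, hd, ← Matrix.one_fin_two]
      rw [hMone, one_pow]
  have h12 : A ^ 12 = 1 := by
    apply Matrix.SpecialLinearGroup.ext
    intro i j
    have hco : ((A ^ 12 : Matrix.SpecialLinearGroup (Fin 2) ℤ) : Matrix (Fin 2) (Fin 2) ℤ)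
        = ((1 : Matrix.SpecialLinearGroup (Fin 2) ℤ) : Matrix (Fin 2) (Fin 2) ℤ) := by
      rw [Matrix.SpecialLinearGroup.coe_pow, Matrix.SpecialLinearGroup.coe_one, ← hM', hM12]
    exact congrFun (congrFun hco i) j
  exact ⟨h12, orderOf_dvd_of_pow_eq_one h12⟩
end

section
/- If A ∈ SL₂(ℤ) satisfies tr(A) = 2 and A ≠ I, then there exist P ∈ GL₂(ℤ) and a nonzero integer k such that P·A·P⁻¹ = [[1, 0], [k, 1]]. -/
/-!
The matrix `N = A - 1` has trace `0` and determinant `0`, so `N² = 0` by Cayley–Hamilton.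
Any nonzero row of `N` therefore lies in the left kernel of `N`; dividing it by its content gives a
primitive vector `v` with `v N = 0`, which is the top row of some `P ∈ SL₂(ℤ)`. Conjugating by `P`
kills the top row of `N`, and since the trace is preserved, `P N P⁻¹ = [[0, 0], [k, 0]]`,
with `k ≠ 0` because `N ≠ 0`.
-/

open Matrix

namespace Matrix

variable {R : Type*} [CommRing R]

theorem sub_one_mul_sub_one_eq_zero_of_fin_two {A : Matrix (Fin 2) (Fin 2) R}
    (hdet : A.det = 1) (htr : A.trace = 2) : (A - 1) * (A - 1) = 0 := by
  rw [det_fin_two] at hdet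
  rw [trace_fin_two] at htr
  ext i j
  fin_cases i <;> fin_cases j <;> simp [mul_apply, Fin.sum_univ_two]
  · linear_combination A 0 0 * htr - hdet
  · linear_combination A 0 1 * htr
  · linear_combination A 1 0 * htr
  · linear_combination A 1 1 * htr - hdet

theorem exists_det_eq_one_row_zero_eq {v : Fin 2 → R} (hv : IsCoprime (v 0) (v 1)) :
    ∃ P : Matrix (Fin 2) (Fin 2) R, P.det = 1 ∧ P 0 = v := by
  obtain ⟨a, b, hab⟩ := hv
  refine ⟨!![v 0, v 1; -b, a], ?_, ?_⟩
  · rw [det_fin_two_of]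
    linear_combination hab
  · ext j
    fin_cases j <;> rfl

theorem conj_eq_of_trace_eq_zero_of_vecMul_eq_zero {P Q N : Matrix (Fin 2) (Fin 2) R}
    (hQP : Q * P = 1) (htr : N.trace = 0) (hN : P 0 ᵥ* N = 0) :
    P * N * Q = !![0, 0; (P * N * Q) 1 0, 0] := by
  have hrow : (P * N * Q) 0 = 0 := by
    rw [mul_apply_eq_vecMul, mul_apply_eq_vecMul, hN, zero_vecMul]
  have htr' : (P * N * Q).trace = 0 := by
    rw [trace_mul_comm (P * N) Q, ← mul_assoc, hQP, one_mul, htr]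
  rw [trace_fin_two, congrFun hrow 0] at htr'
  rw [eta_fin_two (P * N * Q), congrFun hrow 0, congrFun hrow 1]
  simp_all

end Matrix

theorem Int.exists_isCoprime_smul_eq {u : Fin 2 → ℤ} (hu : u ≠ 0) :
    ∃ g : ℤ, g ≠ 0 ∧ ∃ v : Fin 2 → ℤ, IsCoprime (v 0) (v 1) ∧ u = g • v := by
  have hgcd : 0 < Int.gcd (u 0) (u 1) := by
    refine Int.gcd_pos_iff.mpr (not_and_or.mp fun h => hu ?_)
    ext j
    fin_cases j <;> simp [h.1, h.2]
  obtain ⟨g, a, b, hg, hab, ha, hb⟩ := Int.exists_gcd_one' hgcd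
  refine ⟨g, by positivity, ![a, b], Int.isCoprime_iff_gcd_eq_one.mpr hab, ?_⟩
  ext j
  fin_cases j <;> simp [ha, hb, mul_comm]

theorem Int.exists_isCoprime_vecMul_eq_zero {N : Matrix (Fin 2) (Fin 2) ℤ}
    (hN : N * N = 0) (hN0 : N ≠ 0) :
    ∃ v : Fin 2 → ℤ, IsCoprime (v 0) (v 1) ∧ v ᵥ* N = 0 := by
  obtain ⟨i, hi⟩ : ∃ i, N i ≠ 0 := by
    by_contra! h
    exact hN0 (funext h)
  obtain ⟨g, hg, v, hv, hgv⟩ := Int.exists_isCoprime_smul_eq hi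
  refine ⟨v, hv, (smul_eq_zero.mp ?_).resolve_left hg⟩
  rw [← smul_vecMul, ← hgv, ← mul_apply_eq_vecMul, hN]
  rfl

/-- A parabolic element of `SL₂(ℤ)` with trace `2`, other than the identity, is
conjugate in `GL₂(ℤ)` to a lower-triangular unipotent matrix `[[1,0],[k,1]]`
with `k ≠ 0`. -/
theorem SL2Z_trace_two_conjugate (A : Matrix (Fin 2) (Fin 2) ℤ)
    (hdet : A.det = 1) (htr : Matrix.trace A = 2) (hA : A ≠ 1) :
    ∃ P Q : Matrix (Fin 2) (Fin 2) ℤ, P * Q = 1 ∧ Q * P = 1 ∧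
      ∃ k : ℤ, k ≠ 0 ∧ P * A * Q = !![1, 0; k, 1] := by
  set N := A - 1
  have hNtr : N.trace = 0 := by simp [N, htr]
  have hN0 : N ≠ 0 := sub_ne_zero.mpr hA
  obtain ⟨v, hv, hvN⟩ :=
    Int.exists_isCoprime_vecMul_eq_zero (sub_one_mul_sub_one_eq_zero_of_fin_two hdet htr) hN0
  obtain ⟨P, hPdet, hP0⟩ := exists_det_eq_one_row_zero_eq hv
  have hPQ : P * adjugate P = 1 := by simp [mul_adjugate, hPdet]
  have hQP : adjugate P * P = 1 := by simp [adjugate_mul, hPdet]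
  have hconj := conj_eq_of_trace_eq_zero_of_vecMul_eq_zero hQP hNtr (hP0 ▸ hvN)
  refine ⟨P, adjugate P, hPQ, hQP, (P * N * adjugate P) 1 0, fun hk => hN0 ?_, ?_⟩
  · have hzero : P * N * adjugate P = 0 := by
      rw [hconj, hk]
      exact (eta_fin_two 0).symm
    calc N = adjugate P * (P * N * adjugate P) * P := by
          simp only [mul_assoc, hQP, mul_one]
          rw [← mul_assoc, hQP, one_mul]
      _ = 0 := by rw [hzero, mul_zero, zero_mul]
  · rw [show A = 1 + N by simp [N], mul_add, add_mul, mul_one, hPQ, hconj, one_fin_two]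
    ext i j
    fin_cases i <;> fin_cases j <;> simp
end
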